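/- Let λ > 0 and let B : ℝ^{2n} → ℝ^{2n×2n₁} be continuous with λ‖ξ‖² ≤ ξᵀB(v)B(v)ᵀξ ≤ λ⁻¹‖ξ‖² for all v, ξ. Write B = (B_{kj}) in 2×2 blocks, let X(v) = ∫_{𝕋^n} Φ_{−θ} B(Φ_θ v) B(Φ_θ v)ᵀ Φ_θ dθ, and let ⟨⟨B⟩⟩(v) = (⟨⟨B⟩⟩_{kj}(v)) be its unique symmetric positive-semidefinite square root. Then for each 1 ≤ k ≤ n and every v ∈ ℝ^{2n}: Σ_{j=1}^n ‖⟨⟨B⟩⟩_{kj}(v)‖²_{HS} = ∫_{𝕋^n} Σ_{j=1}^{n₁} ‖B_{kj}(Φ_θ v)‖²_{HS} dθ, where ‖·‖_{HS} denotes the Hilbert–Schmidt (Frobenius) norm of a matrix. -/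
import Mathlib

open MeasureTheory Real Matrix

noncomputable section

instance : Fact (0 < 2 * π) := ⟨by positivity⟩

/-- The `n`-dimensional torus `ℝⁿ/(2πℤⁿ)`. -/
abbrev Torus (n : ℕ) := Fin n → AddCircle (2 * π)

/-- The normalized Haar probability measure on the torus. -/
noncomputable def haarT (n : ℕ) : Measure (Torus n) :=
  (ENNReal.ofReal ((2 * π) ^ n))⁻¹ • volume

/-- Cosine, as a function on `ℝ/(2πℤ)`. -/
noncomputable def tcos : AddCircle (2 * π) → ℝ := Real.cos_periodic.lift

/-- Sine, as a function on `ℝ/(2πℤ)`. -/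
noncomputable def tsin : AddCircle (2 * π) → ℝ := Real.sin_periodic.lift

/-- `ℝ^{2n} = (ℝ²)ⁿ`, with Euclidean norm; the `k`-th ℝ²-component of `v` is
`(v (k,0), v (k,1))`. -/
abbrev E2n (n : ℕ) := EuclideanSpace ℝ (Fin n × Fin 2)

/-- The block-diagonal rotation `Φ_θ` acting on `ℝ^{2n}`: the `k`-th ℝ²-block is rotated
by the angle `θ k`. -/
noncomputable def rotVec {n : ℕ} (θ : Torus n) (v : E2n n) : E2n n :=
  (EuclideanSpace.equiv (Fin n × Fin 2) ℝ).symm fun p =>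
    if p.2 = 0 then tcos (θ p.1) * v (p.1, 0) - tsin (θ p.1) * v (p.1, 1)
    else tsin (θ p.1) * v (p.1, 0) + tcos (θ p.1) * v (p.1, 1)

/-- The block-diagonal rotation `Φ_θ` as a `2n × 2n` matrix. -/
noncomputable def rotMat {n : ℕ} (θ : Torus n) : Matrix (Fin n × Fin 2) (Fin n × Fin 2) ℝ :=
  Matrix.of fun p q =>
    if p.1 = q.1 then
      if p.2 = 0 then (if q.2 = 0 then tcos (θ p.1) else -tsin (θ p.1))
      else (if q.2 = 0 then tsin (θ p.1) else tcos (θ p.1))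
    else 0

/-- The averaged drift `R(v) = ∫_{𝕋ⁿ} Φ_{−θ} P(Φ_θ v) dθ`. -/
noncomputable def Rvec {n : ℕ} (P : E2n n → E2n n) (v : E2n n) : E2n n :=
  ∫ θ : Torus n, rotVec (-θ) (P (rotVec θ v)) ∂(haarT n)

/-- The averaged diffusion matrix
`X(v) = ∫_{𝕋ⁿ} Φ_{−θ} B(Φ_θ v) B(Φ_θ v)ᵀ Φ_θ dθ` (defined entrywise). -/
noncomputable def Xmat {n n₁ : ℕ}
    (B : E2n n → Matrix (Fin n × Fin 2) (Fin n₁ × Fin 2) ℝ) (v : E2n n) :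
    Matrix (Fin n × Fin 2) (Fin n × Fin 2) ℝ :=
  Matrix.of fun p q =>
    ∫ θ : Torus n,
      (rotMat (-θ) * (B (rotVec θ v) * (B (rotVec θ v))ᵀ) * rotMat θ) p q ∂(haarT n)

/-! ### Auxiliary lemmas -/

lemma continuous_tcos : Continuous tcos := Real.continuous_cos.quotient_liftOn' _

lemma continuous_tsin : Continuous tsin := Real.continuous_sin.quotient_liftOn' _

lemma tcos_neg (x : AddCircle (2*π)) : tcos (-x) = tcos x := by
  induction x using QuotientAddGroup.induction_on with
  | H z => rw [← AddCircle.coe_neg]; exact Real.cos_neg z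

lemma tsin_neg (x : AddCircle (2*π)) : tsin (-x) = -tsin x := by
  induction x using QuotientAddGroup.induction_on with
  | H z => rw [← AddCircle.coe_neg]; exact Real.sin_neg z

lemma tcos_sq_add (x : AddCircle (2*π)) : tcos x ^ 2 + tsin x ^ 2 = 1 := by
  induction x using QuotientAddGroup.induction_on with
  | H z => exact Real.cos_sq_add_sin_sq z

instance haarT_finite (n : ℕ) : IsFiniteMeasure (haarT n) := by
  constructor
  unfold haarT
  simp only [Measure.smul_apply, smul_eq_mul]
  exact ENNReal.mul_lt_top (by simp [ENNReal.inv_lt_top]; positivity) (measure_lt_top _ _)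

lemma my_integrable {n : ℕ} {f : Torus n → ℝ} (hf : Continuous f) :
    Integrable f (haarT n) :=
  hf.integrable_of_hasCompactSupport (HasCompactSupport.of_compactSpace f)

lemma continuous_rotMat {n : ℕ} (p q : Fin n × Fin 2) :
    Continuous fun θ : Torus n => rotMat θ p q := by
  have hc : ∀ i : Fin n, Continuous fun θ : Torus n => tcos (θ i) :=
    fun i => continuous_tcos.comp (continuous_apply i)
  have hs : ∀ i : Fin n, Continuous fun θ : Torus n => tsin (θ i) :=
    fun i => continuous_tsin.comp (continuous_apply i)
  unfold rotMat
  by_cases h1 : p.1 = q.1 <;> by_cases h2 : p.2 = 0 <;> by_cases h3 : q.2 = 0 <;>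
    simp only [Matrix.of_apply, h1, h2, h3, if_true, if_false] <;>
    first
      | exact hc _ | exact hs _ | exact (hs _).neg | exact (hc _).neg | exact continuous_const

lemma continuous_rotVec {n : ℕ} (v : E2n n) : Continuous fun θ : Torus n => rotVec θ v := by
  unfold rotVec
  refine ((EuclideanSpace.equiv (Fin n × Fin 2) ℝ).symm.continuous).comp
    (continuous_pi fun p => ?_)
  have hc : Continuous fun θ : Torus n => tcos (θ p.1) :=
    continuous_tcos.comp (continuous_apply p.1)
  have hs : Continuous fun θ : Torus n => tsin (θ p.1) :=
    continuous_tsin.comp (continuous_apply p.1)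
  by_cases h : p.2 = 0 <;> simp only [h, if_true, if_false]
  · exact (hc.mul continuous_const).sub (hs.mul continuous_const)
  · exact (hs.mul continuous_const).add (hc.mul continuous_const)

lemma rot_trace_block {n : ℕ} (M : Matrix (Fin n × Fin 2) (Fin n × Fin 2) ℝ)
    (θ : Torus n) (k : Fin n) :
    ∑ a : Fin 2, (rotMat (-θ) * M * rotMat θ) (k, a) (k, a)
      = ∑ a : Fin 2, M (k, a) (k, a) := by
  have h := tcos_sq_add (θ k)
  simp only [Matrix.mul_apply, rotMat, Matrix.of_apply, Fintype.sum_prod_type, Pi.neg_apply,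
    tcos_neg, tsin_neg, ite_mul, mul_ite, zero_mul, mul_zero, add_mul, mul_add, neg_mul,
    mul_neg, neg_neg, Finset.sum_add_distrib, Finset.sum_neg_distrib, Finset.sum_ite_eq,
    Finset.sum_ite_eq', Finset.mem_univ, if_true, Fin.sum_univ_two]
  norm_num
  linear_combination (M (k,0) (k,0) + M (k,1) (k,1)) * h

/-- For continuous uniformly elliptic `B` with averaged diffusion matrix `X` and principal
square root `⟨⟨B⟩⟩ = sq` (written in `2×2` blocks), for each `k` and every `v`:
`Σ_{j=1}^n ‖⟨⟨B⟩⟩_{kj}(v)‖²_HS = ∫_{𝕋ⁿ} Σ_{j=1}^{n₁} ‖B_{kj}(Φ_θ v)‖²_HS dθ`,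
where `‖·‖_HS` is the Hilbert–Schmidt (Frobenius) norm. -/
theorem dispersion_hs_norm_identity
    (n n₁ : ℕ) (lam : ℝ) (hlam : 0 < lam)
    (B : E2n n → Matrix (Fin n × Fin 2) (Fin n₁ × Fin 2) ℝ)
    (hBc : ∀ p q, Continuous fun v => B v p q)
    (hell : ∀ (v : E2n n) (ξ : Fin n × Fin 2 → ℝ),
      lam * (ξ ⬝ᵥ ξ) ≤ ξ ⬝ᵥ (B v * (B v)ᵀ).mulVec ξ ∧
      ξ ⬝ᵥ (B v * (B v)ᵀ).mulVec ξ ≤ lam⁻¹ * (ξ ⬝ᵥ ξ))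
    (sq : E2n n → Matrix (Fin n × Fin 2) (Fin n × Fin 2) ℝ)
    (hsq : ∀ w, (sq w).PosSemidef ∧ sq w * sq w = Xmat B w)
    (k : Fin n) (v : E2n n) :
    ∑ j : Fin n, ∑ a : Fin 2, ∑ b : Fin 2, (sq v (k, a) (j, b)) ^ 2
      = ∫ θ : Torus n,
          (∑ j : Fin n₁, ∑ a : Fin 2, ∑ b : Fin 2,
            (B (rotVec θ v) (k, a) (j, b)) ^ 2) ∂(haarT n) := by
  have hsymm : ∀ p q : Fin n × Fin 2, sq v p q = sq v q p := by
    intro p q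
    conv_lhs => rw [← (hsq v).1.1]
    simp [Matrix.conjTranspose_apply]
  have hBθ : ∀ p q, Continuous fun θ : Torus n => B (rotVec θ v) p q :=
    fun p q => (hBc p q).comp (continuous_rotVec v)
  have hcont : ∀ a : Fin 2,
      Continuous fun θ : Torus n =>
        (rotMat (-θ) * (B (rotVec θ v) * (B (rotVec θ v))ᵀ) * rotMat θ) (k, a) (k, a) := by
    intro a
    simp only [Matrix.mul_apply, Matrix.transpose_apply]
    refine continuous_finset_sum _ fun q _ => Continuous.mul ?_ (continuous_rotMat q (k, a))
    refine continuous_finset_sum _ fun p _ => Continuous.mul ?_ ?_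
    · exact (continuous_rotMat (k, a) p).comp continuous_neg
    · exact continuous_finset_sum _ fun l _ => (hBθ p l).mul (hBθ q l)
  calc
    ∑ j : Fin n, ∑ a : Fin 2, ∑ b : Fin 2, (sq v (k, a) (j, b)) ^ 2
        = ∑ a : Fin 2, (sq v * sq v) (k, a) (k, a) := by
          rw [Finset.sum_comm]
          refine Finset.sum_congr rfl fun a _ => ?_
          rw [Matrix.mul_apply, Fintype.sum_prod_type]
          refine Finset.sum_congr rfl fun j _ => Finset.sum_congr rfl fun b _ => ?_
          rw [hsymm (j, b) (k, a)]
          ring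
    _ = ∑ a : Fin 2, Xmat B v (k, a) (k, a) := by rw [(hsq v).2]
    _ = ∑ a : Fin 2, ∫ θ : Torus n,
          (rotMat (-θ) * (B (rotVec θ v) * (B (rotVec θ v))ᵀ) * rotMat θ) (k, a) (k, a)
          ∂(haarT n) := rfl
    _ = ∫ θ : Torus n, ∑ a : Fin 2,
          (rotMat (-θ) * (B (rotVec θ v) * (B (rotVec θ v))ᵀ) * rotMat θ) (k, a) (k, a)
          ∂(haarT n) := by
          exact (integral_finset_sum _ fun a _ => my_integrable (hcont a)).symm
    _ = ∫ θ : Torus n,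
          (∑ j : Fin n₁, ∑ a : Fin 2, ∑ b : Fin 2,
            (B (rotVec θ v) (k, a) (j, b)) ^ 2) ∂(haarT n) := by
          refine integral_congr_ae (Filter.Eventually.of_forall fun θ => ?_)
          dsimp only
          rw [rot_trace_block]
          rw [Finset.sum_comm]
          refine Finset.sum_congr rfl fun a _ => ?_
          rw [Matrix.mul_apply, Fintype.sum_prod_type]
          exact Finset.sum_congr rfl fun j _ => Finset.sum_congr rfl fun b _ => by
            rw [Matrix.transpose_apply]; ring
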